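/- Let A be a splitting class. Then there exists a p-morphism from the Kripke frame (A/≡_T, ≤_T) onto the full infinite binary tree 2^{<ω} ordered by the prefix relation. -/

import Mathlib

/-- `RecursiveIn O f` means the partial function `f : ℕ →. ℕ` is partial recursive
relative to the oracle `O : ℕ →. ℕ`. -/
inductive RelRecursiveIn (O : ℕ →. ℕ) : (ℕ →. ℕ) → Prop
  | oracle : RelRecursiveIn O O
  | zero : RelRecursiveIn O (pure 0)
  | succ : RelRecursiveIn O Nat.succ
  | left : RelRecursiveIn O fun n => (Nat.unpair n).1
  | right : RelRecursiveIn O fun n => (Nat.unpair n).2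
  | pair {f g : ℕ →. ℕ} : RelRecursiveIn O f → RelRecursiveIn O g →
      RelRecursiveIn O fun n => Nat.pair <$> f n <*> g n
  | comp {f g : ℕ →. ℕ} : RelRecursiveIn O f → RelRecursiveIn O g →
      RelRecursiveIn O fun n => g n >>= f
  | prec {f g : ℕ →. ℕ} : RelRecursiveIn O f → RelRecursiveIn O g →
      RelRecursiveIn O (Nat.unpaired fun a n =>
        n.rec (f a) fun y IH => do let i ← IH; g (Nat.pair a (Nat.pair y i)))
  | rfind {f : ℕ →. ℕ} : RelRecursiveIn O f →
      RelRecursiveIn O fun a => Nat.rfind fun n => (fun m => m = 0) <$> f (Nat.pair a n)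

/-- Turing reducibility on total functions in Baire space. -/
def TuringLE (f g : ℕ → ℕ) : Prop := RelRecursiveIn (↑g) (↑f)

/-- Turing equivalence. -/
def TuringEquiv (f g : ℕ → ℕ) : Prop := TuringLE f g ∧ TuringLE g f

/-- The join `f ⊕ g` of two elements of Baire space. -/
def fjoin (f g : ℕ → ℕ) : ℕ → ℕ := fun n => if n % 2 = 0 then f (n / 2) else g (n / 2)

/-- Relativization is transitive. -/
theorem RelRecursiveIn.trans' {O f g : ℕ →. ℕ}
    (hf : RelRecursiveIn g f) (hg : RelRecursiveIn O g) : RelRecursiveIn O f := by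
  induction hf with
  | oracle => exact hg
  | zero => exact .zero
  | succ => exact .succ
  | left => exact .left
  | right => exact .right
  | pair _ _ ih₁ ih₂ => exact .pair ih₁ ih₂
  | comp _ _ ih₁ ih₂ => exact .comp ih₁ ih₂
  | prec _ _ ih₁ ih₂ => exact .prec ih₁ ih₂
  | rfind _ ih => exact .rfind ih

/-- Turing equivalence as a setoid on the members of a mass problem `A`. -/
def turingSetoid (A : Set (ℕ → ℕ)) : Setoid {f : ℕ → ℕ // f ∈ A} where
  r f g := TuringLE f.1 g.1 ∧ TuringLE g.1 f.1
  iseqv := by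
    refine ⟨fun f => ⟨.oracle, .oracle⟩, fun h => ⟨h.2, h.1⟩, fun h₁ h₂ => ⟨?_, ?_⟩⟩
    · exact RelRecursiveIn.trans' h₁.1 h₂.1
    · exact RelRecursiveIn.trans' h₂.2 h₁.2

/-- The Kripke frame `A/≡_T`: the quotient of `A` by Turing equivalence. -/
def TDegrees (A : Set (ℕ → ℕ)) := Quotient (turingSetoid A)

/-- The ordering of `A/≡_T` induced by Turing reducibility. -/
def qle (A : Set (ℕ → ℕ)) : TDegrees A → TDegrees A → Prop :=
  Quotient.lift₂ (fun f g => TuringLE f.1 g.1) (by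
    rintro a b a' b' ⟨haa', ha'a⟩ ⟨hbb', hb'b⟩
    refine propext ⟨fun h => ?_, fun h => ?_⟩
    · exact RelRecursiveIn.trans' (RelRecursiveIn.trans' ha'a h) hbb'
    · exact RelRecursiveIn.trans' (RelRecursiveIn.trans' haa' h) hb'b)


def SplittingClass (A : Set (ℕ → ℕ)) : Prop :=
  A.Nonempty ∧ A.Countable ∧ (∀ f ∈ A, ∀ g : ℕ → ℕ, TuringLE g f → g ∈ A) ∧
    ∀ f ∈ A, ∀ B : Set (ℕ → ℕ), B.Finite → B ⊆ {g | g ∈ A ∧ ¬ TuringLE g f} →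
      ∃ h₀ ∈ A, ∃ h₁ ∈ A, TuringLE f h₀ ∧ TuringLE f h₁ ∧ fjoin h₀ h₁ ∉ A ∧
        ∀ g ∈ B, fjoin g h₀ ∉ A ∧ fjoin g h₁ ∉ A


/-!
Enumerate `A` as `F 0, F 1, …` and build, in stages, a finite set of *nodes*: members of `A`
labelled by binary strings, starting from the computable function labelled `[]`. At stage `n`
let `σ` be the longest label of a node below `F n`, split `F n` into `h₀, h₁ ≥_T F n` that have
no common upper bound in `A` with each other, nor with any earlier node or `F j` (`j ≤ n`) that
is not below `F n`, and label `h_b` by `σ ++ [b]`.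

Inductively, nodes with a common upper bound in `A` have comparable labels, and a node made at
stage `n` lies below no `F j` with `j ≤ n`. So each `f ∈ A` bounds finitely many nodes, their
labels form a chain, and `f ↦` (the longest of them) is monotone and sends `h_b` to `σ ++ [b]`.
Any such labelling of `A` induces a p-morphism onto `2^{<ω}`.
-/

theorem RelRecursiveIn.of_partrec {O f : ℕ →. ℕ} (h : Nat.Partrec f) : RelRecursiveIn O f := by
  induction h with
  | zero => exact .zero
  | succ => exact .succ
  | left => exact .left
  | right => exact .right
  | pair _ _ ih₁ ih₂ => exact .pair ih₁ ih₂
  | comp _ _ ih₁ ih₂ => exact .comp ih₁ ih₂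
  | prec _ _ ih₁ ih₂ => exact .prec ih₁ ih₂
  | rfind _ ih => exact .rfind ih

theorem RelRecursiveIn.of_computable {O : ℕ →. ℕ} {f : ℕ → ℕ} (h : Computable f) :
    RelRecursiveIn O f :=
  .of_partrec (Partrec.nat_iff.1 h.partrec)

theorem RelRecursiveIn.comp_total {O : ℕ →. ℕ} {f g : ℕ → ℕ} (hf : RelRecursiveIn O f)
    (hg : RelRecursiveIn O g) : RelRecursiveIn O ↑(fun n => f (g n)) := by
  have hcomp : (↑(fun n => f (g n)) : ℕ →. ℕ) = fun n => (g : ℕ →. ℕ) n >>= (f : ℕ →. ℕ) := by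
    funext n
    simp only [PFun.coe_val]
    exact (Part.bind_some _ _).symm
  exact hcomp ▸ hf.comp hg

theorem RelRecursiveIn.pair_total {O : ℕ →. ℕ} {f g : ℕ → ℕ} (hf : RelRecursiveIn O f)
    (hg : RelRecursiveIn O g) : RelRecursiveIn O ↑(fun n => Nat.pair (f n) (g n)) := by
  have hpair : (↑(fun n => Nat.pair (f n) (g n)) : ℕ →. ℕ) =
      fun n => Nat.pair <$> (f : ℕ →. ℕ) n <*> (g : ℕ →. ℕ) n := by
    funext n
    simp [PFun.coe_val, Seq.seq]
  exact hpair ▸ hf.pair hg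

namespace TuringLE

theorem refl (f : ℕ → ℕ) : TuringLE f f := .oracle

theorem trans {f g h : ℕ → ℕ} (hfg : TuringLE f g) (hgh : TuringLE g h) : TuringLE f h :=
  hfg.trans' hgh

theorem zero_le (f : ℕ → ℕ) : TuringLE 0 f :=
  (.zero : RelRecursiveIn f (pure 0))

theorem fjoin_le {f g c : ℕ → ℕ} (hf : TuringLE f c) (hg : TuringLE g c) :
    TuringLE (fjoin f g) c := by
  have hhalf : RelRecursiveIn c ↑(fun n : ℕ => n / 2) :=
    .of_computable (Primrec.nat_div.comp .id (.const 2)).to_comp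
  -- `fjoin f g n` is read off `⟪⟪f (n / 2), g (n / 2)⟫, n⟫` by a computable selector.
  have hselect : Computable fun m : ℕ =>
      if m.unpair.2 % 2 = 0 then m.unpair.1.unpair.1 else m.unpair.1.unpair.2 := by
    have hparity : PrimrecPred fun m : ℕ => m.unpair.2 % 2 = 0 :=
      PrimrecRel.comp Primrec.eq
        (Primrec.nat_mod.comp (Primrec.snd.comp .unpair) (.const 2)) (.const 0)
    exact (Primrec.ite hparity
      (Primrec.fst.comp (Primrec.unpair.comp (Primrec.fst.comp .unpair)))
      (Primrec.snd.comp (Primrec.unpair.comp (Primrec.fst.comp .unpair)))).to_comp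
  have hcode : RelRecursiveIn c ↑(fun n => Nat.pair (Nat.pair (f (n / 2)) (g (n / 2))) n) :=
    .pair_total (.pair_total (hf.comp_total hhalf) (hg.comp_total hhalf))
      (.of_computable .id)
  have hfjoin : fjoin f g = fun n =>
      if (Nat.pair (Nat.pair (f (n / 2)) (g (n / 2))) n).unpair.2 % 2 = 0
      then (Nat.pair (Nat.pair (f (n / 2)) (g (n / 2))) n).unpair.1.unpair.1
      else (Nat.pair (Nat.pair (f (n / 2)) (g (n / 2))) n).unpair.1.unpair.2 := by
    funext n
    simp only [fjoin, Nat.unpair_pair]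
  rw [TuringLE, hfjoin]
  exact (RelRecursiveIn.of_computable hselect).comp_total hcode

end TuringLE

def TuringCompatible (A : Set (ℕ → ℕ)) (f g : ℕ → ℕ) : Prop :=
  ∃ c ∈ A, TuringLE f c ∧ TuringLE g c

theorem TuringCompatible.symm {A : Set (ℕ → ℕ)} {f g : ℕ → ℕ} :
    TuringCompatible A f g → TuringCompatible A g f
  | ⟨c, hc, hf, hg⟩ => ⟨c, hc, hg, hf⟩

section Splitting

variable {A : Set (ℕ → ℕ)}

theorem not_turingCompatible_of_fjoin_not_mem (hdown : ∀ f ∈ A, ∀ g, TuringLE g f → g ∈ A)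
    {f g : ℕ → ℕ} (h : fjoin f g ∉ A) : ¬ TuringCompatible A f g :=
  fun ⟨c, hc, hf, hg⟩ => h (hdown c hc _ (hf.fjoin_le hg))

theorem not_turingCompatible_of_not_mem (hdown : ∀ f ∈ A, ∀ g, TuringLE g f → g ∈ A)
    {f g : ℕ → ℕ} (hf : f ∉ A) : ¬ TuringCompatible A f g :=
  fun ⟨c, hc, hfc, _⟩ => hf (hdown c hc f hfc)

def IsSplitPair (A : Set (ℕ → ℕ)) (f : ℕ → ℕ) (B : Set (ℕ → ℕ)) (h : Bool → ℕ → ℕ) : Prop :=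
  ∀ b, h b ∈ A ∧ TuringLE f (h b) ∧ ¬ TuringCompatible A (h b) (h !b) ∧
    ∀ g ∈ B, ¬ TuringLE g f → ¬ TuringCompatible A g (h b)

def IsSplitting (A : Set (ℕ → ℕ)) (split : (ℕ → ℕ) → Set (ℕ → ℕ) → Bool → ℕ → ℕ) : Prop :=
  ∀ f ∈ A, ∀ B : Set (ℕ → ℕ), B.Finite → IsSplitPair A f B (split f B)

theorem SplittingClass.zero_mem (hA : SplittingClass A) : (0 : ℕ → ℕ) ∈ A :=
  let ⟨f, hf⟩ := hA.1
  hA.2.2.1 f hf 0 (.zero_le f)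

theorem SplittingClass.exists_isSplitPair (hA : SplittingClass A) {f : ℕ → ℕ} (hf : f ∈ A)
    {B : Set (ℕ → ℕ)} (hB : B.Finite) : ∃ h, IsSplitPair A f B h := by
  obtain ⟨-, -, hdown, hsplit⟩ := hA
  obtain ⟨h₀, h₀A, h₁, h₁A, hf₀, hf₁, hjoin, hB'⟩ :=
    hsplit f hf {g ∈ B | g ∈ A ∧ ¬ TuringLE g f} (hB.subset (Set.sep_subset _ _))
      fun g hg => hg.2
  have hincomp := not_turingCompatible_of_fjoin_not_mem hdown hjoin
  have hBincomp : ∀ g ∈ B, ¬ TuringLE g f →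
      ¬ TuringCompatible A g h₀ ∧ ¬ TuringCompatible A g h₁ := by
    intro g hg hgf
    by_cases hgA : g ∈ A
    · obtain ⟨hg₀, hg₁⟩ := hB' g ⟨hg, hgA, hgf⟩
      exact ⟨not_turingCompatible_of_fjoin_not_mem hdown hg₀,
        not_turingCompatible_of_fjoin_not_mem hdown hg₁⟩
    · exact ⟨not_turingCompatible_of_not_mem hdown hgA,
        not_turingCompatible_of_not_mem hdown hgA⟩
  refine ⟨fun b => cond b h₁ h₀, fun b => ?_⟩
  cases b
  · exact ⟨h₀A, hf₀, hincomp, fun g hg hgf => (hBincomp g hg hgf).1⟩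
  · exact ⟨h₁A, hf₁, fun h => hincomp h.symm, fun g hg hgf => (hBincomp g hg hgf).2⟩

theorem SplittingClass.exists_isSplitting (hA : SplittingClass A) :
    ∃ split, IsSplitting A split := by
  have hpair : ∀ f B, ∃ h, f ∈ A → B.Finite → IsSplitPair A f B h := by
    intro f B
    by_cases hfB : f ∈ A ∧ B.Finite
    · obtain ⟨h, hh⟩ := hA.exists_isSplitPair hfB.1 hfB.2
      exact ⟨h, fun _ _ => hh⟩
    · exact ⟨0, fun hf hB => absurd ⟨hf, hB⟩ hfB⟩
  choose split hsplit using hpair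
  exact ⟨split, fun f hf B hB => hsplit f B hf hB⟩

end Splitting

section PrefixGreatest

variable {α : Type*}

def IsPrefixGreatest (s : Set (List α)) (τ : List α) : Prop :=
  τ ∈ s ∧ ∀ σ ∈ s, σ <+: τ

theorem IsPrefixGreatest.unique {s : Set (List α)} {σ τ : List α} (hσ : IsPrefixGreatest s σ)
    (hτ : IsPrefixGreatest s τ) : σ = τ :=
  (hτ.2 σ hσ.1).eq_of_length_le (hσ.2 τ hτ.1).length_le

theorem IsPrefixGreatest.prefix_of_subset {s t : Set (List α)} {σ τ : List α} (hst : s ⊆ t)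
    (hσ : IsPrefixGreatest s σ) (hτ : IsPrefixGreatest t τ) : σ <+: τ :=
  hτ.2 σ (hst hσ.1)

theorem exists_isPrefixGreatest {s : Set (List α)} (hfin : s.Finite) (hne : s.Nonempty)
    (hchain : IsChain (· <+: ·) s) : ∃ τ, IsPrefixGreatest s τ := by
  obtain ⟨τ, hτ, hlongest⟩ := s.exists_max_image List.length hfin hne
  refine ⟨τ, hτ, fun σ hσ => ?_⟩
  rcases eq_or_ne σ τ with rfl | hστ
  · exact List.prefix_rfl
  rcases hchain hσ hτ hστ with h | h
  · exact h
  · exact (h.eq_of_length_le (hlongest σ hσ)).symm ▸ List.prefix_rfl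

noncomputable def greatestPrefix (s : Set (List α)) : List α :=
  Classical.epsilon (IsPrefixGreatest s)

theorem IsPrefixGreatest.greatestPrefix_eq {s : Set (List α)} {τ : List α}
    (h : IsPrefixGreatest s τ) : greatestPrefix s = τ :=
  (Classical.epsilon_spec ⟨τ, h⟩).unique h

end PrefixGreatest

theorem exists_le_label_eq_append {A : Set (ℕ → ℕ)} (label : (ℕ → ℕ) → List Bool)
    (hstep : ∀ f ∈ A, ∀ b, ∃ g ∈ A, TuringLE f g ∧ label g = label f ++ [b])
    (σ : List Bool) : ∀ f ∈ A, ∃ g ∈ A, TuringLE f g ∧ label g = label f ++ σ := by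
  induction σ using List.reverseRecOn with
  | nil => exact fun f hf => ⟨f, hf, .refl f, (List.append_nil _).symm⟩
  | append_singleton σ b ih =>
    intro f hf
    obtain ⟨g, hg, hfg, hlabel_g⟩ := ih f hf
    obtain ⟨h, hh, hgh, hlabel_h⟩ := hstep g hg b
    exact ⟨h, hh, hfg.trans hgh, by rw [hlabel_h, hlabel_g, List.append_assoc]⟩

theorem exists_pmorphism_of_label {A : Set (ℕ → ℕ)} (label : (ℕ → ℕ) → List Bool)
    (hmono : ∀ f ∈ A, ∀ g ∈ A, TuringLE f g → label f <+: label g)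
    (hroot : ∃ f ∈ A, label f = [])
    (hstep : ∀ f ∈ A, ∀ b, ∃ g ∈ A, TuringLE f g ∧ label g = label f ++ [b]) :
    ∃ α : TDegrees A → List Bool,
      Function.Surjective α ∧
      (∀ x y : TDegrees A, qle A x y → α x <+: α y) ∧
      (∀ x : TDegrees A, ∀ τ : List Bool, α x <+: τ →
        ∃ y : TDegrees A, qle A x y ∧ α y = τ) := by
  let α : TDegrees A → List Bool := Quotient.lift (fun f => label f.1) fun f g hfg =>
    (hmono _ f.2 _ g.2 hfg.1).eq_of_length_le (hmono _ g.2 _ f.2 hfg.2).length_le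
  have hback : ∀ x τ, α x <+: τ → ∃ y, qle A x y ∧ α y = τ := by
    rintro ⟨f, hf⟩ _ ⟨σ, rfl⟩
    obtain ⟨g, hg, hfg, hlabel⟩ := exists_le_label_eq_append label hstep σ f hf
    exact ⟨Quotient.mk _ ⟨g, hg⟩, hfg, hlabel⟩
  refine ⟨α, fun τ => ?_, ?_, hback⟩
  · obtain ⟨r, hr, hlabel⟩ := hroot
    obtain ⟨y, -, hy⟩ :=
      hback (Quotient.mk _ ⟨r, hr⟩) τ (hlabel.symm ▸ List.nil_prefix : label r <+: τ)
    exact ⟨y, hy⟩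
  · rintro ⟨f, hf⟩ ⟨g, hg⟩ hfg
    exact hmono f hf g hg hfg

namespace SplittingConstruction

abbrev Node := (ℕ → ℕ) × List Bool

def tagsBelow (S : Set Node) (f : ℕ → ℕ) : Set (List Bool) :=
  Prod.snd '' {p ∈ S | TuringLE p.1 f}

theorem tagsBelow_mono {S T : Set Node} {f g : ℕ → ℕ} (hST : S ⊆ T) (hfg : TuringLE f g) :
    tagsBelow S f ⊆ tagsBelow T g := by
  rintro _ ⟨p, ⟨hp, hpf⟩, rfl⟩
  exact ⟨p, ⟨hST hp, hpf.trans hfg⟩, rfl⟩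

theorem tagsBelow_finite {S : Set Node} (hS : S.Finite) (f : ℕ → ℕ) :
    (tagsBelow S f).Finite :=
  (hS.subset (Set.sep_subset _ _)).image _

def IsCoherent (A : Set (ℕ → ℕ)) (S : Set Node) : Prop :=
  ∀ p ∈ S, ∀ q ∈ S, TuringCompatible A p.1 q.1 → p.2 <+: q.2 ∨ q.2 <+: p.2

theorem IsCoherent.isChain_tagsBelow {A : Set (ℕ → ℕ)} {S : Set Node} (hS : IsCoherent A S)
    {f : ℕ → ℕ} (hf : f ∈ A) : IsChain (· <+: ·) (tagsBelow S f) := by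
  rintro _ ⟨p, ⟨hp, hpf⟩, rfl⟩ _ ⟨q, ⟨hq, hqf⟩, rfl⟩ -
  exact hS p hp q hq ⟨f, hf, hpf, hqf⟩

variable (F : ℕ → ℕ → ℕ) (split : (ℕ → ℕ) → Set (ℕ → ℕ) → Bool → ℕ → ℕ)

def blockers (S : Set Node) (n : ℕ) : Set (ℕ → ℕ) :=
  Prod.fst '' S ∪ F '' Set.Iic n

noncomputable def stage : ℕ → Set Node
  | 0 => {(0, [])}
  | n + 1 => stage n ∪ Set.range fun b =>
      (split (F n) (blockers F (stage n) n) b,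
        greatestPrefix (tagsBelow (stage n) (F n)) ++ [b])

noncomputable def topTag (n : ℕ) : List Bool :=
  greatestPrefix (tagsBelow (stage F split n) (F n))

noncomputable def child (n : ℕ) (b : Bool) : Node :=
  (split (F n) (blockers F (stage F split n) n) b, topTag F split n ++ [b])

def nodes : Set Node := ⋃ n, stage F split n

noncomputable def label (f : ℕ → ℕ) : List Bool :=
  greatestPrefix (tagsBelow (nodes F split) f)

variable {F split}

theorem stage_succ (n : ℕ) :
    stage F split (n + 1) = stage F split n ∪ Set.range (child F split n) :=
  rfl

theorem mem_stage_iff {n : ℕ} {p : Node} :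
    p ∈ stage F split n ↔ p = (0, []) ∨ ∃ k < n, ∃ b, p = child F split k b := by
  induction n with
  | zero => simp [stage]
  | succ n ih =>
    rw [stage_succ, Set.mem_union, ih, Set.mem_range]
    constructor
    · rintro ((h | ⟨k, hk, b, rfl⟩) | ⟨b, rfl⟩)
      exacts [.inl h, .inr ⟨k, by omega, b, rfl⟩, .inr ⟨n, by omega, b, rfl⟩]
    · rintro (h | ⟨k, hk, b, rfl⟩)
      · exact .inl (.inl h)
      · rcases Nat.lt_succ_iff_lt_or_eq.1 hk with hk | rfl
        exacts [.inl (.inr ⟨k, hk, b, rfl⟩), .inr ⟨b, rfl⟩]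

theorem zero_mem_stage (n : ℕ) : ((0, []) : Node) ∈ stage F split n :=
  mem_stage_iff.2 (.inl rfl)

theorem child_mem_stage {k n : ℕ} (hkn : k < n) (b : Bool) :
    child F split k b ∈ stage F split n :=
  mem_stage_iff.2 (.inr ⟨k, hkn, b, rfl⟩)

theorem mem_nodes_of_mem_stage {n : ℕ} {p : Node} (hp : p ∈ stage F split n) : p ∈ nodes F split :=
  Set.mem_iUnion.2 ⟨n, hp⟩

theorem stage_finite (n : ℕ) : (stage F split n).Finite := by
  induction n with
  | zero => exact Set.finite_singleton _
  | succ n ih => exact ih.union (Set.finite_range _)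

theorem blockers_finite (n : ℕ) : (blockers F (stage F split n) n).Finite :=
  ((stage_finite n).image _).union ((Set.finite_Iic n).image F)

variable {A : Set (ℕ → ℕ)}

theorem child_fst_mem (hF : ∀ n, F n ∈ A) (hsplit : IsSplitting A split) (n : ℕ) (b : Bool) :
    (child F split n b).1 ∈ A :=
  (hsplit (F n) (hF n) _ (blockers_finite n) b).1

theorem F_le_child (hF : ∀ n, F n ∈ A) (hsplit : IsSplitting A split) (n : ℕ) (b : Bool) :
    TuringLE (F n) (child F split n b).1 :=
  (hsplit (F n) (hF n) _ (blockers_finite n) b).2.1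

theorem not_compatible_children (hF : ∀ n, F n ∈ A) (hsplit : IsSplitting A split)
    (n : ℕ) (b : Bool) :
    ¬ TuringCompatible A (child F split n b).1 (child F split n !b).1 :=
  (hsplit (F n) (hF n) _ (blockers_finite n) b).2.2.1

theorem not_compatible_child_of_mem_blockers (hF : ∀ n, F n ∈ A) (hsplit : IsSplitting A split)
    {n : ℕ} {g : ℕ → ℕ}
    (hg : g ∈ blockers F (stage F split n) n) (hgF : ¬ TuringLE g (F n)) (b : Bool) :
    ¬ TuringCompatible A g (child F split n b).1 :=
  (hsplit (F n) (hF n) _ (blockers_finite n) b).2.2.2 g hg hgF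

theorem child_not_le_F (hF : ∀ n, F n ∈ A) (hsplit : IsSplitting A split) (n : ℕ) (b : Bool) :
    ¬ TuringLE (child F split n b).1 (F n) := fun h =>
  not_compatible_children hF hsplit n b
    ⟨_, child_fst_mem hF hsplit n !b, h.trans (F_le_child hF hsplit n !b), .refl _⟩

theorem child_not_le_of_mem_blockers (hF : ∀ n, F n ∈ A) (hsplit : IsSplitting A split)
    {n : ℕ} {g : ℕ → ℕ} (hg : g ∈ blockers F (stage F split n) n) (hgA : g ∈ A) (b : Bool) :
    ¬ TuringLE (child F split n b).1 g := by
  intro hle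
  by_cases hgF : TuringLE g (F n)
  · exact child_not_le_F hF hsplit n b (hle.trans hgF)
  · exact not_compatible_child_of_mem_blockers hF hsplit hg hgF b ⟨g, hgA, .refl g, hle⟩

theorem fst_mem_of_mem_stage (h0 : (0 : ℕ → ℕ) ∈ A) (hF : ∀ n, F n ∈ A)
    (hsplit : IsSplitting A split) {n : ℕ} {p : Node} (hp : p ∈ stage F split n) : p.1 ∈ A := by
  rcases mem_stage_iff.1 hp with rfl | ⟨k, -, b, rfl⟩
  exacts [h0, child_fst_mem hF hsplit k b]

theorem child_not_le_of_mem_stage (h0 : (0 : ℕ → ℕ) ∈ A) (hF : ∀ n, F n ∈ A)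
    (hsplit : IsSplitting A split) {n : ℕ} {p : Node} (hp : p ∈ stage F split n) (b : Bool) :
    ¬ TuringLE (child F split n b).1 p.1 :=
  child_not_le_of_mem_blockers hF hsplit (.inl ⟨p, hp, rfl⟩)
    (fst_mem_of_mem_stage h0 hF hsplit hp) b

theorem mem_stage_of_le_F (hF : ∀ n, F n ∈ A) (hsplit : IsSplitting A split) {m n : ℕ}
    {p : Node} (hp : p ∈ stage F split n) (hpF : TuringLE p.1 (F m)) : p ∈ stage F split m := by
  rcases mem_stage_iff.1 hp with rfl | ⟨k, -, b, rfl⟩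
  · exact zero_mem_stage m
  · by_cases hkm : k < m
    · exact child_mem_stage hkm b
    · exact absurd hpF
        (child_not_le_of_mem_blockers hF hsplit (.inr ⟨m, not_lt.1 hkm, rfl⟩) (hF m) b)

theorem isPrefixGreatest_topTag (hF : ∀ n, F n ∈ A) {n : ℕ}
    (hcoh : IsCoherent A (stage F split n)) :
    IsPrefixGreatest (tagsBelow (stage F split n) (F n)) (topTag F split n) := by
  obtain ⟨τ, hτ⟩ := exists_isPrefixGreatest (tagsBelow_finite (stage_finite n) (F n))
    ⟨[], (0, []), ⟨zero_mem_stage n, .zero_le _⟩, rfl⟩ (hcoh.isChain_tagsBelow (hF n))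
  rwa [topTag, hτ.greatestPrefix_eq]

theorem snd_prefix_child_of_compatible (hF : ∀ n, F n ∈ A) (hsplit : IsSplitting A split) {n : ℕ}
    (hcoh : IsCoherent A (stage F split n)) {p : Node} (hp : p ∈ stage F split (n + 1))
    {b : Bool} (hpc : TuringCompatible A p.1 (child F split n b).1) :
    p.2 <+: (child F split n b).2 := by
  rcases hp with hp | ⟨b', rfl⟩
  · by_cases hpF : TuringLE p.1 (F n)
    · exact ((isPrefixGreatest_topTag hF hcoh).2 _ ⟨p, ⟨hp, hpF⟩, rfl⟩).trans
        (List.prefix_append _ _)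
    · exact absurd hpc
        (not_compatible_child_of_mem_blockers hF hsplit (.inl ⟨p, hp, rfl⟩) hpF b)
  · rcases Bool.eq_or_eq_not b' b with rfl | rfl
    · exact List.prefix_rfl
    · exact absurd hpc.symm (not_compatible_children hF hsplit n b)

theorem IsCoherent.stage_succ (hF : ∀ n, F n ∈ A) (hsplit : IsSplitting A split) {n : ℕ}
    (hcoh : IsCoherent A (stage F split n)) : IsCoherent A (stage F split (n + 1)) := by
  intro p hp q hq hpq
  rcases hq with hq | ⟨b, rfl⟩
  · rcases hp with hp | ⟨b, rfl⟩
    · exact hcoh p hp q hq hpq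
    · exact .inr (snd_prefix_child_of_compatible hF hsplit hcoh (.inl hq) hpq.symm)
  · exact .inl (snd_prefix_child_of_compatible hF hsplit hcoh hp hpq)

theorem isCoherent_stage (hF : ∀ n, F n ∈ A) (hsplit : IsSplitting A split) (n : ℕ) :
    IsCoherent A (stage F split n) := by
  induction n with
  | zero =>
    rintro p rfl q rfl -
    exact .inl List.prefix_rfl
  | succ n ih => exact ih.stage_succ hF hsplit

theorem isPrefixGreatest_tagsBelow_F (hF : ∀ n, F n ∈ A) (hsplit : IsSplitting A split)
    (m : ℕ) : IsPrefixGreatest (tagsBelow (nodes F split) (F m)) (topTag F split m) := by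
  have htop := isPrefixGreatest_topTag hF (isCoherent_stage hF hsplit m)
  refine ⟨tagsBelow_mono (Set.subset_iUnion _ m) (.refl _) htop.1, ?_⟩
  rintro _ ⟨p, ⟨hp, hpF⟩, rfl⟩
  obtain ⟨n, hn⟩ := Set.mem_iUnion.1 hp
  exact htop.2 _ ⟨p, ⟨mem_stage_of_le_F hF hsplit hn hpF, hpF⟩, rfl⟩

theorem isPrefixGreatest_tagsBelow_child (h0 : (0 : ℕ → ℕ) ∈ A) (hF : ∀ n, F n ∈ A)
    (hsplit : IsSplitting A split) (n : ℕ) (b : Bool) :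
    IsPrefixGreatest (tagsBelow (nodes F split) (child F split n b).1)
      (topTag F split n ++ [b]) := by
  refine ⟨⟨_, ⟨mem_nodes_of_mem_stage (child_mem_stage n.lt_succ_self b), .refl _⟩, rfl⟩, ?_⟩
  rintro _ ⟨p, ⟨hp, hpc⟩, rfl⟩
  obtain ⟨m, hm⟩ := Set.mem_iUnion.1 hp
  have hp' : p ∈ stage F split (n + 1) := by
    rcases mem_stage_iff.1 hm with rfl | ⟨k, -, b', rfl⟩
    · exact zero_mem_stage _
    · refine child_mem_stage ?_ b'
      by_contra! hk
      exact child_not_le_of_mem_stage h0 hF hsplit (child_mem_stage hk b) b' hpc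
  exact snd_prefix_child_of_compatible hF hsplit (isCoherent_stage hF hsplit n) hp'
    ⟨_, child_fst_mem hF hsplit n b, hpc, .refl _⟩

theorem isPrefixGreatest_tagsBelow_zero (hF : ∀ n, F n ∈ A) (hsplit : IsSplitting A split) :
    IsPrefixGreatest (tagsBelow (nodes F split) 0) [] := by
  refine ⟨⟨(0, []), ⟨mem_nodes_of_mem_stage (zero_mem_stage 0), .refl 0⟩, rfl⟩, ?_⟩
  rintro _ ⟨p, ⟨hp, hp0⟩, rfl⟩
  obtain ⟨m, hm⟩ := Set.mem_iUnion.1 hp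
  rcases mem_stage_iff.1 hm with rfl | ⟨k, -, b, rfl⟩
  · exact List.prefix_rfl
  · exact absurd (hp0.trans (.zero_le (F k))) (child_not_le_F hF hsplit k b)

theorem label_F (hF : ∀ n, F n ∈ A) (hsplit : IsSplitting A split) (n : ℕ) :
    label F split (F n) = topTag F split n :=
  (isPrefixGreatest_tagsBelow_F hF hsplit n).greatestPrefix_eq

theorem label_mono (hF : ∀ n, F n ∈ A) (hsplit : IsSplitting A split) {m n : ℕ}
    (hmn : TuringLE (F m) (F n)) : label F split (F m) <+: label F split (F n) := by
  rw [label_F hF hsplit, label_F hF hsplit]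
  exact (isPrefixGreatest_tagsBelow_F hF hsplit m).prefix_of_subset
    (tagsBelow_mono subset_rfl hmn) (isPrefixGreatest_tagsBelow_F hF hsplit n)

theorem label_child (h0 : (0 : ℕ → ℕ) ∈ A) (hF : ∀ n, F n ∈ A) (hsplit : IsSplitting A split)
    (n : ℕ) (b : Bool) : label F split (child F split n b).1 = label F split (F n) ++ [b] := by
  rw [label_F hF hsplit]
  exact (isPrefixGreatest_tagsBelow_child h0 hF hsplit n b).greatestPrefix_eq

theorem label_zero (hF : ∀ n, F n ∈ A) (hsplit : IsSplitting A split) : label F split 0 = [] :=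
  (isPrefixGreatest_tagsBelow_zero hF hsplit).greatestPrefix_eq

end SplittingConstruction

open SplittingConstruction in
/-- For any splitting class `A` there is a p-morphism from the Kripke frame
`(A/≡_T, ≤_T)` onto the full infinite binary tree `2^{<ω}` (finite binary strings
ordered by the prefix relation). -/
theorem splitting_pmorphism (A : Set (ℕ → ℕ)) (hA : SplittingClass A) :
    ∃ α : TDegrees A → List Bool,
      Function.Surjective α ∧
      (∀ x y : TDegrees A, qle A x y → α x <+: α y) ∧
      (∀ x : TDegrees A, ∀ τ : List Bool, α x <+: τ →
        ∃ y : TDegrees A, qle A x y ∧ α y = τ) := by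
  obtain ⟨split, hsplit⟩ := hA.exists_isSplitting
  have h0 := hA.zero_mem
  obtain ⟨F, rfl⟩ := hA.2.1.exists_eq_range hA.1
  have hF : ∀ n, F n ∈ Set.range F := Set.mem_range_self
  refine exists_pmorphism_of_label (label F split) ?_ ⟨0, h0, label_zero hF hsplit⟩ ?_
  · rintro _ ⟨m, rfl⟩ _ ⟨n, rfl⟩ hmn
    exact label_mono hF hsplit hmn
  · rintro _ ⟨n, rfl⟩ b
    exact ⟨_, child_fst_mem hF hsplit n b, F_le_child hF hsplit n b, label_child h0 hF hsplit n b⟩
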